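/- Let L be an algebraically closed field of characteristic zero and let K be a subfield of L. Suppose A, B, w ∈ K[x,y] satisfy: Jac(A,B) is a unit of K[x,y] and Jac(A,w) = 0. Then w lies in K[A], the K-subalgebra of K[x,y] generated by A. -/

import Mathlib

/-!
Since `Jac(A,B)` is a unit, Cramer's rule turns `Jac(A,w) = 0` into `∇w = f ∇A` for some
polynomial `f`, and equality of mixed partials then gives `Jac(A,f) = 0`. If `w` is not constant,
`f` has smaller total degree than `w`, so by induction `f = P(A)`; then `w - Q(A)` is constant for
an antiderivative `Q` of `P`, which exists in characteristic zero.
-/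

open MvPolynomial

/-- The Jacobian of two polynomials `p, q ∈ R[x,y]`:
`Jac(p,q) = (∂p/∂x)(∂q/∂y) − (∂p/∂y)(∂q/∂x)`. -/
noncomputable def Jac {R : Type*} [CommRing R]
    (p q : MvPolynomial (Fin 2) R) : MvPolynomial (Fin 2) R :=
  pderiv 0 p * pderiv 1 q - pderiv 1 p * pderiv 0 q

namespace MvPolynomial

variable {σ R : Type*}

theorem pderiv_pderiv_comm [CommRing R] (i j : σ) (p : MvPolynomial σ R) :
    pderiv i (pderiv j p) = pderiv j (pderiv i p) := by
  have : ⁅pderiv i, pderiv j⁆ = (0 : Derivation R (MvPolynomial σ R) (MvPolynomial σ R)) :=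
    derivation_ext fun k => by
      classical
      rw [Derivation.commutator_apply, pderiv_X, pderiv_X, Pi.single_apply, Pi.single_apply]
      split_ifs <;> simp
  rw [← sub_eq_zero, ← Derivation.commutator_apply, this, Derivation.zero_apply]

theorem totalDegree_pderiv_lt [CommSemiring R] {i : σ} {p : MvPolynomial σ R}
    (h : pderiv i p ≠ 0) : (pderiv i p).totalDegree < p.totalDegree := by
  obtain ⟨m, hm, hmax⟩ := Finset.exists_mem_eq_sup _ (support_nonempty.mpr h)
    fun s : σ →₀ ℕ => s.degree
  have hm' : m + Finsupp.single i 1 ∈ p.support := by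
    rw [mem_support_iff, coeff_pderiv] at hm
    exact mem_support_iff.mpr (left_ne_zero_of_mul hm)
  calc (pderiv i p).totalDegree = m.degree := hmax
    _ < (m + Finsupp.single i 1).degree := by simp
    _ ≤ p.totalDegree := le_totalDegree hm'

theorem eq_C_of_pderiv_eq_zero [CommSemiring R] [NoZeroDivisors R] [CharZero R]
    {p : MvPolynomial σ R} (h : ∀ i, pderiv i p = 0) : p = C (coeff 0 p) := by
  classical
  ext m
  rw [coeff_C]
  split_ifs with hm
  · rw [hm]
  obtain ⟨i, hi⟩ : ∃ i, m i ≠ 0 := by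
    by_contra! h0
    exact hm (Finsupp.ext h0).symm
  obtain ⟨m', rfl⟩ : ∃ m', m = m' + Finsupp.single i 1 :=
    ⟨m - Finsupp.single i 1,
      (tsub_add_cancel_of_le (Finsupp.single_le_iff.mpr (Nat.one_le_iff_ne_zero.mpr hi))).symm⟩
  have := coeff_pderiv (i := i) p m'
  rw [h i, coeff_zero, eq_comm] at this
  exact (mul_eq_zero.mp this).resolve_right (Nat.cast_add_one_ne_zero (m' i))

end MvPolynomial

theorem Polynomial.exists_derivative_eq {F : Type*} [Field F] [CharZero F] (P : Polynomial F) :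
    ∃ Q : Polynomial F, Polynomial.derivative Q = P := by
  induction P using Polynomial.induction_on' with
  | monomial n a =>
    refine ⟨Polynomial.monomial (n + 1) (a / (n + 1)), ?_⟩
    rw [Polynomial.derivative_monomial, Nat.add_sub_cancel, Nat.cast_add_one,
      div_mul_cancel₀ _ (Nat.cast_add_one_ne_zero n)]
  | add p q hp hq =>
    obtain ⟨Qp, rfl⟩ := hp
    obtain ⟨Qq, rfl⟩ := hq
    exact ⟨Qp + Qq, map_add _ _ _⟩

section Jacobian

variable {R : Type*} [CommRing R] {A B w f : MvPolynomial (Fin 2) R}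

theorem exists_pderiv_eq_mul_pderiv_of_jac_eq_zero (hAB : IsUnit (Jac A B))
    (hAw : Jac A w = 0) : ∃ f, ∀ i, pderiv i w = f * pderiv i A := by
  obtain ⟨v, hv⟩ := hAB.exists_left_inv
  refine ⟨v * Jac w B, Fin.forall_fin_two.mpr ⟨?_, ?_⟩⟩ <;> unfold Jac at *
  · linear_combination (-pderiv 0 w) * hv + v * pderiv 0 B * hAw
  · linear_combination (-pderiv 1 w) * hv + v * pderiv 1 B * hAw

theorem jac_eq_zero_of_pderiv_eq_mul (h : ∀ i, pderiv i w = f * pderiv i A) : Jac A f = 0 := by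
  have e0 := congr(pderiv 1 $(h 0))
  have e1 := congr(pderiv 0 $(h 1))
  rw [pderiv_mul] at e0 e1
  unfold Jac
  linear_combination e1 - e0 + f * pderiv_pderiv_comm 0 1 A - pderiv_pderiv_comm 0 1 w

end Jacobian

section CharZero

variable {F : Type*} [Field F] [CharZero F]

theorem mem_adjoin_of_pderiv_eq_mul {σ : Type*} {A w f : MvPolynomial σ F}
    (hf : f ∈ Algebra.adjoin F {A}) (h : ∀ i, pderiv i w = f * pderiv i A) :
    w ∈ Algebra.adjoin F {A} := by
  rw [Algebra.adjoin_singleton_eq_range_aeval, AlgHom.mem_range] at hf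
  obtain ⟨P, rfl⟩ := hf
  obtain ⟨Q, hQ⟩ := P.exists_derivative_eq
  have hconst : ∀ i, pderiv i (w - Polynomial.aeval A Q) = 0 := fun i => by
    rw [map_sub, Derivation.map_aeval, hQ, smul_eq_mul, h i, sub_self]
  rw [← sub_add_cancel w (Polynomial.aeval A Q), eq_C_of_pderiv_eq_zero hconst,
    ← algebraMap_eq]
  exact add_mem (Subalgebra.algebraMap_mem _ _) (Q.aeval_mem_adjoin_singleton F A)

theorem mem_adjoin_of_jac_eq_zero {A B w : MvPolynomial (Fin 2) F} (hAB : IsUnit (Jac A B))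
    (hAw : Jac A w = 0) : w ∈ Algebra.adjoin F {A} := by
  induction hn : w.totalDegree using Nat.strong_induction_on generalizing w with
  | _ n ih =>
    obtain ⟨f, hf⟩ := exists_pderiv_eq_mul_pderiv_of_jac_eq_zero hAB hAw
    by_cases hconst : ∀ i, pderiv i w = 0
    · rw [eq_C_of_pderiv_eq_zero hconst, ← algebraMap_eq]
      exact Subalgebra.algebraMap_mem _ _
    obtain ⟨i, hi⟩ := not_forall.mp hconst
    have hfA : f * pderiv i A ≠ 0 := hf i ▸ hi
    have hdeg : f.totalDegree < n := calc
      f.totalDegree ≤ (f * pderiv i A).totalDegree :=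
        totalDegree_le_of_dvd_of_isDomain (dvd_mul_right f _) hfA
      _ = (pderiv i w).totalDegree := by rw [hf i]
      _ < n := hn ▸ totalDegree_pderiv_lt hi
    exact mem_adjoin_of_pderiv_eq_mul (ih _ hdeg (jac_eq_zero_of_pderiv_eq_mul hf) rfl) hf

end CharZero

theorem cmw_over_subfield_general {L : Type*} [Field L] [CharZero L]
    (K : Subfield L)
    (A B w : MvPolynomial (Fin 2) ↥K)
    (hAB : IsUnit (Jac A B)) (hAw : Jac A w = 0) :
    w ∈ Algebra.adjoin ↥K {A} :=
  mem_adjoin_of_jac_eq_zero hAB hAw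

/-- **CMW's theorem over any subfield `K` of an algebraically closed field `L` of
characteristic zero.** If `A, B, w ∈ K[x,y]` satisfy that `Jac(A,B)` is a unit of
`K[x,y]` and `Jac(A,w) = 0`, then `w ∈ K[A]`. -/
theorem cmw_over_subfield {L : Type*} [Field L] [IsAlgClosed L] [CharZero L]
    (K : Subfield L)
    (A B w : MvPolynomial (Fin 2) ↥K)
    (hAB : IsUnit (Jac A B)) (hAw : Jac A w = 0) :
    w ∈ Algebra.adjoin ↥K {A} :=
  cmw_over_subfield_general K A B w hAB hAw
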